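/- Let F_q be a finite field of odd characteristic p with q = p^n elements. If q ≡ 1 (mod 8) or q ≡ 3 (mod 8), then the unit group U(F_q[QD_16]) of the group algebra F_q[QD_16] is isomorphic to C_{q-1}^4 × GL(2,F_q)^3, the direct product of four copies of the cyclic group of order q - 1 and three copies of the general linear group GL(2,F_q). -/

import Mathlib

/-- Relations for the quasidihedral group `QD_{2^k}`:
`a^(2^(k-1)) = 1`, `x^2 = 1`, `x * a * x = a^(2^(k-2)-1)`. -/
def qdRels (k : ℕ) : Set (FreeGroup (Fin 2)) :=
  {FreeGroup.of 0 ^ (2 ^ (k - 1)), FreeGroup.of 1 ^ 2,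
    FreeGroup.of 1 * FreeGroup.of 0 * FreeGroup.of 1 * (FreeGroup.of 0 ^ (2 ^ (k - 2) - 1))⁻¹}

/-- The quasidihedral group of order 16: `⟨a, x | a^8 = x^2 = 1, x a x = a^3⟩`. -/
def QD16 : Type := PresentedGroup (qdRels 4)

instance : Group QD16 := inferInstanceAs (Group (PresentedGroup (qdRels 4)))

/-!
Over a field with `2 ≠ 0` in which `-2` is a square (which is what `q ≡ 1, 3 mod 8` provides),
`QD₁₆` has four linear representations, the representation of its dihedral quotient sending `a` to
the rotation by a quarter turn, and two faithful two-dimensional ones sending `a` to the two square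
roots `±t • (1 - rotation)` of that rotation, where `2 * t ^ 2 = -1`. Together they give an algebra
map `F[QD₁₆] → F⁴ × M₂(F)³`. The sum of the traces weighted by the degrees pulls back to `16` times
the coefficient of `1`, so the map is injective, and both sides have dimension `16`. Taking units,
and using that `F_q^×` is cyclic of order `q - 1`, gives the claim.
-/

theorem pow_val_add_of_pow_eq_one {M : Type*} [Monoid M] {A : M} {n : ℕ} [NeZero n]
    (hA : A ^ n = 1) (u v : ZMod n) : A ^ (u + v).val = A ^ u.val * A ^ v.val := by
  rw [ZMod.val_add, ← pow_eq_pow_mod _ hA, pow_add]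

/-- The element `⟨i, j⟩` stands for `a ^ i * x ^ j`; the product comes from
`x * a ^ k = a ^ (3 * k) * x`. -/
@[ext] structure QD16Model where
  i : ZMod 8
  j : ZMod 2
deriving DecidableEq, Fintype

namespace QD16Model

instance : Mul QD16Model := ⟨fun g h => ⟨g.i + 3 ^ g.j.val * h.i, g.j + h.j⟩⟩
instance : One QD16Model := ⟨⟨0, 0⟩⟩
instance : Inv QD16Model := ⟨fun g => ⟨-(3 ^ g.j.val * g.i), g.j⟩⟩

instance : Group QD16Model where
  mul_assoc := by decide
  one_mul := by decide
  mul_one := by decide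
  inv_mul_cancel := by decide

theorem card : Fintype.card QD16Model = 16 := rfl

def a : QD16Model := ⟨1, 0⟩
def x : QD16Model := ⟨0, 1⟩

theorem a_pow_mul_x_pow (g : QD16Model) : a ^ g.i.val * x ^ g.j.val = g := by
  revert g; decide

theorem one_def : (1 : QD16Model) = ⟨0, 0⟩ := rfl

section lift

variable {M : Type*} [Monoid M] {A X : M}

def lift (hA : A ^ 8 = 1) (hX : X ^ 2 = 1) (hXA : X * A = A ^ 3 * X) : QD16Model →* M where
  toFun g := A ^ g.i.val * X ^ g.j.val
  map_one' := by simp [one_def]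
  map_mul' := by
    rintro ⟨i, j⟩ ⟨k, l⟩
    change A ^ (i + 3 ^ j.val * k).val * X ^ (j + l).val = _
    have hj : j = 0 ∨ j = 1 := by revert j; decide
    rcases hj with rfl | rfl
    · simp [pow_val_add_of_pow_eq_one hA, mul_assoc]
    · have hX_pow : X * A ^ k.val = A ^ (3 * k).val * X := by
        rw [ZMod.val_mul, ← pow_eq_pow_mod _ hA, pow_mul]
        exact (SemiconjBy.pow_right hXA k.val).eq
      simp only [pow_val_add_of_pow_eq_one hA, pow_val_add_of_pow_eq_one hX, ZMod.val_one,
        pow_one, mul_assoc]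
      rw [← mul_assoc X, hX_pow, mul_assoc]

@[simp] theorem lift_apply (hA : A ^ 8 = 1) (hX : X ^ 2 = 1) (hXA : X * A = A ^ 3 * X)
    (g : QD16Model) : lift hA hX hXA g = A ^ g.i.val * X ^ g.j.val := rfl

theorem hom_ext {φ ψ : QD16Model →* M} (ha : φ a = ψ a) (hx : φ x = ψ x) : φ = ψ := by
  ext g
  rw [← a_pow_mul_x_pow g]
  simp only [map_mul, map_pow, ha, hx]

end lift

end QD16Model

namespace QD16

def a : QD16 := PresentedGroup.of 0
def x : QD16 := PresentedGroup.of 1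

theorem a_pow_eight : a ^ 8 = 1 := by
  have h := PresentedGroup.one_of_mem (rels := qdRels 4) (x := FreeGroup.of 0 ^ 8) (by left; rfl)
  rw [map_pow] at h
  exact h

theorem x_sq : x ^ 2 = 1 := by
  have h := PresentedGroup.one_of_mem (rels := qdRels 4) (x := FreeGroup.of 1 ^ 2)
    (by right; left; rfl)
  rw [map_pow] at h
  exact h

theorem x_mul_a : x * a = a ^ 3 * x := by
  have h := PresentedGroup.one_of_mem (rels := qdRels 4)
    (x := FreeGroup.of 1 * FreeGroup.of 0 * FreeGroup.of 1 * (FreeGroup.of 0 ^ 3)⁻¹)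
    (by right; right; rfl)
  rw [map_mul, map_inv, map_pow, map_mul, map_mul, mul_inv_eq_one] at h
  -- `map_pow` produced the power of `PresentedGroup`, which `rw` does not match with that of `QD16`
  replace h : x * a * x = a ^ 3 := h
  calc x * a = x * a * x * x := by rw [mul_assoc _ x x, ← sq, x_sq, mul_one]
    _ = a ^ 3 * x := congrArg (· * x) h

def toModel : QD16 →* QD16Model :=
  PresentedGroup.toGroup (f := ![QD16Model.a, QD16Model.x]) <| by
    rintro r (rfl | rfl | rfl) <;> simp <;> decide

def mulEquivModel : QD16 ≃* QD16Model :=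
  toModel.toMulEquiv (QD16Model.lift a_pow_eight x_sq x_mul_a)
    (PresentedGroup.ext fun i => by fin_cases i <;> rfl)
    (QD16Model.hom_ext rfl rfl)

end QD16

namespace QD16Model

abbrev Components (F : Type*) : Type _ :=
  F × F × F × F × Matrix (Fin 2) (Fin 2) F × Matrix (Fin 2) (Fin 2) F ×
    Matrix (Fin 2) (Fin 2) F

variable {F : Type*} [Field F]

def rotation : Matrix (Fin 2) (Fin 2) F := !![0, -1; 1, 0]

def reflection : Matrix (Fin 2) (Fin 2) F := !![1, 0; 0, -1]

/-- For `2 * t ^ 2 = -1` this is `t • (1 - rotation)`, a square root of `rotation`. -/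
def sqrtRotation (t : F) : Matrix (Fin 2) (Fin 2) F := !![t, t; -t, t]

theorem rotation_sq : (rotation : Matrix (Fin 2) (Fin 2) F) ^ 2 = -1 := by
  ext i j; fin_cases i <;> fin_cases j <;> simp [sq, rotation]

theorem reflection_sq : (reflection : Matrix (Fin 2) (Fin 2) F) ^ 2 = 1 := by
  ext i j; fin_cases i <;> fin_cases j <;> simp [sq, reflection]

theorem sqrtRotation_sq {t : F} (ht : 2 * t ^ 2 = -1) : sqrtRotation t ^ 2 = rotation := by
  ext i j; fin_cases i <;> fin_cases j <;> simp [sq, sqrtRotation, rotation] <;>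
    first | linear_combination ht | linear_combination -ht

theorem rotation_pow_four : (rotation : Matrix (Fin 2) (Fin 2) F) ^ 4 = 1 := by
  rw [show 4 = 2 * 2 by rfl, pow_mul, rotation_sq, neg_one_sq]

theorem rotation_pow_eight : (rotation : Matrix (Fin 2) (Fin 2) F) ^ 8 = 1 := by
  rw [show 8 = 4 * 2 by rfl, pow_mul, rotation_pow_four, one_pow]

theorem sqrtRotation_pow_eight {t : F} (ht : 2 * t ^ 2 = -1) : sqrtRotation t ^ 8 = 1 := by
  rw [show 8 = 2 * 4 by rfl, pow_mul, sqrtRotation_sq ht, rotation_pow_four]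

theorem reflection_mul_rotation :
    (reflection : Matrix (Fin 2) (Fin 2) F) * rotation = rotation ^ 3 * reflection := by
  ext i j; fin_cases i <;> fin_cases j <;> simp [pow_succ, reflection, rotation]

theorem reflection_mul_sqrtRotation {t : F} (ht : 2 * t ^ 2 = -1) :
    reflection * sqrtRotation t = sqrtRotation t ^ 3 * reflection := by
  rw [pow_succ, sqrtRotation_sq ht]
  ext i j; fin_cases i <;> fin_cases j <;> simp [reflection, rotation, sqrtRotation]

def linearRep (u v : F) (hu : u ^ 2 = 1) (hv : v ^ 2 = 1) : QD16Model →* F :=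
  lift (by rw [show 8 = 2 * 4 by rfl, pow_mul, hu, one_pow]) hv
    (by rw [pow_succ, hu, one_mul, mul_comm])

def dihedralRep : QD16Model →* Matrix (Fin 2) (Fin 2) F :=
  lift rotation_pow_eight reflection_sq reflection_mul_rotation

def faithfulRep {t : F} (ht : 2 * t ^ 2 = -1) : QD16Model →* Matrix (Fin 2) (Fin 2) F :=
  lift (sqrtRotation_pow_eight ht) reflection_sq (reflection_mul_sqrtRotation ht)

def decomposition {t : F} (ht : 2 * t ^ 2 = -1) : QD16Model →* Components F :=
  (linearRep 1 1 (one_pow 2) (one_pow 2)).prod <|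
    (linearRep 1 (-1) (one_pow 2) neg_one_sq).prod <|
    (linearRep (-1) 1 neg_one_sq (one_pow 2)).prod <|
    (linearRep (-1) (-1) neg_one_sq neg_one_sq).prod <|
    dihedralRep.prod <| (faithfulRep ht).prod (faithfulRep (t := -t) (by rwa [neg_sq]))

/-- Composed with `decomposition`, this degree-weighted sum of traces is the regular character. -/
def traceForm : Components F →ₗ[F] F where
  toFun c := c.1 + c.2.1 + c.2.2.1 + c.2.2.2.1 +
    2 * (c.2.2.2.2.1.trace + c.2.2.2.2.2.1.trace + c.2.2.2.2.2.2.trace)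
  map_add' c d := by simp only [Prod.fst_add, Prod.snd_add, Matrix.trace_add]; ring
  map_smul' r c := by
    simp only [Prod.smul_fst, Prod.smul_snd, Matrix.trace_smul, smul_eq_mul, RingHom.id_apply]
    ring

theorem traceForm_decomposition {t : F} (ht : 2 * t ^ 2 = -1) (g : QD16Model) :
    traceForm (decomposition ht g) = if g = 1 then 16 else 0 := by
  have hA (s : F) (hs : 2 * s ^ 2 = -1) (n : ℕ) :
      sqrtRotation s ^ n = rotation ^ (n / 2) * sqrtRotation s ^ (n % 2) := by
    rw [← sqrtRotation_sq hs, ← pow_mul, ← pow_add, Nat.div_add_mod]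
  have hg : g = 1 ↔ g.i.val = 0 ∧ g.j.val = 0 := by
    simp [QD16Model.ext_iff, one_def]
  obtain ⟨i, j⟩ := g
  simp only [traceForm, decomposition, linearRep, dihedralRep, faithfulRep, LinearMap.coe_mk,
    AddHom.coe_mk, MonoidHom.prod_apply, lift_apply, hg]
  -- after this rewrite the terms linear in `t` cancel between the two faithful components
  rw [hA t ht, hA (-t) (by rwa [neg_sq])]
  have hm := i.val_lt
  have hn := j.val_lt
  generalize i.val = m at *
  generalize j.val = n at *
  interval_cases m <;> interval_cases n <;>
    simp [rotation, sqrtRotation, reflection, pow_succ, Matrix.one_fin_two] <;> norm_num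

end QD16Model

namespace MonoidAlgebra

variable {k G A : Type*} [Field k] [Ring A] [Algebra k A]

theorem lift_injective_of_functional [Group G] [DecidableEq G] (ρ : G →* A) (T : A →ₗ[k] k)
    {c : k} (hc : c ≠ 0) (hT : ∀ g, T (ρ g) = if g = 1 then c else 0) :
    Function.Injective (lift k A G ρ) := by
  have hcoeff (x : MonoidAlgebra k G) : T (lift k A G ρ x) = c * x.coeff 1 := by
    induction x using MonoidAlgebra.induction_linear with
    | zero => simp
    | add x y hx hy => simp [hx, hy, mul_add]
    | single g r => simp [lift_single, hT, Finsupp.single_apply, mul_comm]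
  rw [injective_iff_map_eq_zero]
  intro x hx
  ext g
  have h := hcoeff (x * single g⁻¹ 1)
  rw [map_mul, hx, zero_mul, map_zero, coeff_mul_single_apply, one_mul, inv_inv, mul_one] at h
  exact (mul_eq_zero.mp h.symm).resolve_left hc

theorem finrank_eq_card [Monoid G] [Fintype G] :
    Module.finrank k (MonoidAlgebra k G) = Fintype.card G :=
  (coeffLinearEquiv k).finrank_eq.trans (Module.finrank_finsupp_self k)

noncomputable def algEquivOfFunctional [Group G] [DecidableEq G] [Fintype G]
    [FiniteDimensional k A] (ρ : G →* A) (T : A →ₗ[k] k) {c : k} (hc : c ≠ 0)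
    (hT : ∀ g, T (ρ g) = if g = 1 then c else 0)
    (hdim : Fintype.card G = Module.finrank k A) : MonoidAlgebra k G ≃ₐ[k] A :=
  have hinj := lift_injective_of_functional ρ T hc hT
  AlgEquiv.ofBijective (lift k A G ρ) ⟨hinj,
    (LinearMap.injective_iff_surjective_of_finrank_eq_finrank (f := (lift k A G ρ).toLinearMap)
      (finrank_eq_card.trans hdim)).mp hinj⟩

end MonoidAlgebra

noncomputable def QD16.groupAlgebraEquiv {F : Type*} [Field F] {t : F} (ht : 2 * t ^ 2 = -1)
    (h16 : (16 : F) ≠ 0) : MonoidAlgebra F QD16 ≃ₐ[F] QD16Model.Components F :=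
  (MonoidAlgebra.domCongr F F QD16.mulEquivModel).trans <|
    MonoidAlgebra.algEquivOfFunctional (QD16Model.decomposition ht) QD16Model.traceForm h16
      (QD16Model.traceForm_decomposition ht)
      (by simp [QD16Model.card, Module.finrank_prod, Module.finrank_matrix])

noncomputable def FiniteField.unitsMulEquivZMod (F : Type*) [Field F] [Fintype F] :
    Fˣ ≃* Multiplicative (ZMod (Fintype.card F - 1)) :=
  mulEquivOfCyclicCardEq <| by
    classical
    rw [Nat.card_eq_fintype_card, Fintype.card_units]
    exact (Nat.card_zmod _).symm

theorem unitGroup_QD16_one_three_general (F : Type) [Field F] [Fintype F]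
    (h8 : Fintype.card F % 8 = 1 ∨ Fintype.card F % 8 = 3) :
    Nonempty ((MonoidAlgebra F QD16)ˣ ≃*
      (Multiplicative (ZMod (Fintype.card F - 1)) ×
       Multiplicative (ZMod (Fintype.card F - 1)) ×
       Multiplicative (ZMod (Fintype.card F - 1)) ×
       Multiplicative (ZMod (Fintype.card F - 1)) ×
       Matrix.GeneralLinearGroup (Fin 2) F ×
       Matrix.GeneralLinearGroup (Fin 2) F ×
       Matrix.GeneralLinearGroup (Fin 2) F)) := by
  have h2 : (2 : F) ≠ 0 := Ring.two_ne_zero <| by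
    rw [Ne, FiniteField.even_card_iff_char_two]; omega
  obtain ⟨s, hs⟩ := (FiniteField.isSquare_neg_two_iff (F := F)).mpr (by omega)
  have ht : 2 * (s / 2) ^ 2 = -1 := by field_simp; linear_combination -hs
  have h16 : (16 : F) ≠ 0 := by simpa [show (2 : F) ^ 4 = 16 by norm_num] using pow_ne_zero 4 h2
  let U := FiniteField.unitsMulEquivZMod F
  exact ⟨(Units.mapEquiv (QD16.groupAlgebraEquiv ht h16).toMulEquiv).trans <|
    MulEquiv.prodUnits.trans <| U.prodCongr <| MulEquiv.prodUnits.trans <| U.prodCongr <|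
    MulEquiv.prodUnits.trans <| U.prodCongr <| MulEquiv.prodUnits.trans <| U.prodCongr <|
    MulEquiv.prodUnits.trans <| (MulEquiv.refl _).prodCongr MulEquiv.prodUnits⟩

theorem unitGroup_QD16_one_three (F : Type) [Field F] [Fintype F]
    (p n : ℕ) [Fact p.Prime] (hp : Odd p) [CharP F p]
    (hn : 0 < n) (hq : Fintype.card F = p ^ n)
    (h8 : Fintype.card F % 8 = 1 ∨ Fintype.card F % 8 = 3) :
    Nonempty ((MonoidAlgebra F QD16)ˣ ≃*
      (Multiplicative (ZMod (Fintype.card F - 1)) ×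
       Multiplicative (ZMod (Fintype.card F - 1)) ×
       Multiplicative (ZMod (Fintype.card F - 1)) ×
       Multiplicative (ZMod (Fintype.card F - 1)) ×
       Matrix.GeneralLinearGroup (Fin 2) F ×
       Matrix.GeneralLinearGroup (Fin 2) F ×
       Matrix.GeneralLinearGroup (Fin 2) F)) :=
  unitGroup_QD16_one_three_general F h8
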